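/- arXiv:2310.18015 — 2 statements merged into one kernel-verified Lean document; each statement's English description precedes it below -/
import Mathlib

section
/- Let H be a real Hilbert space, V, Q closed subspaces of a product structure, and define for pairs (u,p) the norm ‖(u,p)‖² = ‖u‖_V² + ‖p‖_Q². If b : Q × V → ℝ is bounded bilinear and satisfies the inf-sup condition: ∀ p ∈ Q₀, ∃ v ∈ V₀, v ≠ 0, b(p, v) ≥ K_b‖p‖_Q‖v‖_V with K_b > 0, and a : V × V → ℝ is bounded, symmetric, and coercive on the kernel K_V = {v ∈ V₀ : b(q,v) = 0 ∀ q ∈ Q₀} with constant α > 0, then the saddle-point bilinear form B((u,p),(v,q)) = a(u,v) + b(p,v) + b(q,u) satisfies an inf-sup condition on V₀ × Q₀ with a constant depending only on K_b, α and the continuity constants (Brezzi's theorem). -/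
/-!
Riesz representation turns `a` and `b`, restricted to `V₀` and `Q₀`, into operators
`A : V₀ → V₀` and `S : Q₀ → V₀`, and the kernel `K_V` becomes `ker S†`. The inf-sup condition says
that `S` is bounded below; hence its range is closed, equal to `(ker S†)ᗮ`, and `S†` is bounded
below there with the same constant. Testing with `v = A u + S p`, `q = S† u` gives
`B((u,p),(v,q)) = ‖v‖² + ‖q‖²`, while splitting `u` along `ker S† ⊕ (ker S†)ᗮ` and using coercivity
on the first summand bounds `‖u‖ + ‖p‖` by a multiple of `‖v‖ + ‖q‖`.
-/

open InnerProductSpace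
open scoped InnerProduct RealInnerProductSpace

theorem le_norm_of_mul_norm_le_inner {E : Type*} [NormedAddCommGroup E] [InnerProductSpace ℝ E]
    {x v : E} {c : ℝ} (hv : v ≠ 0) (h : c * ‖v‖ ≤ ⟪x, v⟫) : c ≤ ‖x‖ :=
  le_of_mul_le_mul_right (h.trans (real_inner_le_norm x v)) (norm_pos_iff.mpr hv)

theorem exists_inner_eq_of_abs_le {E F : Type*} [NormedAddCommGroup E] [InnerProductSpace ℝ E]
    [CompleteSpace E] [NormedAddCommGroup F] [InnerProductSpace ℝ F]
    (f : F →ₗ[ℝ] E →ₗ[ℝ] ℝ) {C : ℝ} (hf : ∀ x y, |f x y| ≤ C * ‖x‖ * ‖y‖) :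
    ∃ R : F →L[ℝ] E, ∀ x y, ⟪R x, y⟫ = f x y := by
  let fc := f.mkContinuous₂ C hf
  refine ⟨{ toFun := fun x => (toDual ℝ E).symm (fc x)
            map_add' := fun x x' => by simp
            map_smul' := fun r x => by simp
            cont := (toDual ℝ E).symm.continuous.comp fc.continuous }, fun x y => ?_⟩
  exact toDual_symm_apply

section
variable {E F : Type*} [NormedAddCommGroup E] [InnerProductSpace ℝ E]
  [NormedAddCommGroup F] [InnerProductSpace ℝ F] [CompleteSpace F]
  {S : F →L[ℝ] E} {K : ℝ}

theorem ContinuousLinearMap.isClosed_range_of_mul_norm_le (hK : 0 < K)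
    (hS : ∀ q, K * ‖q‖ ≤ ‖S q‖) : IsClosed (S.range : Set E) := by
  have : AntilipschitzWith (Real.toNNReal K⁻¹) S := S.antilipschitz_of_bound fun q => by
    rw [Real.coe_toNNReal _ (inv_nonneg.mpr hK.le), inv_mul_eq_div, le_div_iff₀ hK]
    linarith [hS q]
  exact this.isClosed_range S.uniformContinuous

variable [CompleteSpace E]

theorem ContinuousLinearMap.mul_norm_le_norm_adjoint_apply (hK : 0 < K)
    (hS : ∀ q, K * ‖q‖ ≤ ‖S q‖) {x : E} (hx : x ∈ S†.kerᗮ) : K * ‖x‖ ≤ ‖(S†) x‖ := by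
  rw [S†.orthogonal_ker, adjoint_adjoint,
    (S.isClosed_range_of_mul_norm_le hK hS).submodule_topologicalClosure_eq] at hx
  obtain ⟨w, rfl⟩ := hx
  rw [ContinuousLinearMap.coe_coe]
  have hw : ‖S w‖ ^ 2 ≤ ‖w‖ * ‖(S†) (S w)‖ := by
    rw [← real_inner_self_eq_norm_sq, ← adjoint_inner_right]
    exact real_inner_le_norm _ _
  rcases (norm_nonneg (S w)).eq_or_lt with h0 | h0
  · rw [← h0, mul_zero]
    exact norm_nonneg _
  · refine le_of_mul_le_mul_right ?_ h0
    nlinarith [mul_le_mul_of_nonneg_right (hS w) (norm_nonneg ((S†) (S w)))]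

end

theorem inv_mul_sqrt_mul_sqrt_le {x y s t M : ℝ} (hx : 0 ≤ x) (hy : 0 ≤ y)
    (hM : 0 < M) (h : x + y ≤ M * (s + t)) :
    (2 * M)⁻¹ * √(x ^ 2 + y ^ 2) * √(s ^ 2 + t ^ 2) ≤ s ^ 2 + t ^ 2 := by
  have hxy : √(x ^ 2 + y ^ 2) ≤ x + y :=
    Real.sqrt_le_iff.mpr ⟨by positivity, by nlinarith⟩
  have hst : s + t ≤ 2 * √(s ^ 2 + t ^ 2) := by
    rw [← Real.sqrt_mul_self (by norm_num : (0:ℝ) ≤ 2), ← Real.sqrt_mul (by norm_num)]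
    exact Real.le_sqrt_of_sq_le (by nlinarith [sq_nonneg (s - t)])
  have key : √(x ^ 2 + y ^ 2) ≤ 2 * M * √(s ^ 2 + t ^ 2) := by
    nlinarith [mul_le_mul_of_nonneg_left hst hM.le]
  calc (2 * M)⁻¹ * √(x ^ 2 + y ^ 2) * √(s ^ 2 + t ^ 2)
      ≤ (2 * M)⁻¹ * (2 * M * √(s ^ 2 + t ^ 2)) * √(s ^ 2 + t ^ 2) := by gcongr
    _ = s ^ 2 + t ^ 2 := by
      rw [← mul_assoc, inv_mul_cancel₀ (by positivity), one_mul, Real.mul_self_sqrt (by positivity)]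

namespace Brezzi

variable {E F : Type*} [NormedAddCommGroup E] [InnerProductSpace ℝ E] [CompleteSpace E]
  [NormedAddCommGroup F] [InnerProductSpace ℝ F] [CompleteSpace F]
  {A : E →L[ℝ] E} {S : F →L[ℝ] E} {α K : ℝ}

theorem mul_norm_le_of_mem_ker_adjoint (hA : ∀ v ∈ (S†).ker, α * ‖v‖ ^ 2 ≤ ⟪A v, v⟫)
    {u₀ : E} (hu₀ : u₀ ∈ (S†).ker) (u₁ : E) (p : F) :
    α * ‖u₀‖ ≤ ‖A (u₀ + u₁) + S p‖ + ‖A‖ * ‖u₁‖ := by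
  have hSp : ⟪S p, u₀⟫ = 0 := by
    rw [← ContinuousLinearMap.adjoint_inner_right, show (S†) u₀ = 0 from hu₀, inner_zero_right]
  have key : α * ‖u₀‖ * ‖u₀‖ ≤ (‖A (u₀ + u₁) + S p‖ + ‖A‖ * ‖u₁‖) * ‖u₀‖ :=
    calc α * ‖u₀‖ * ‖u₀‖ = α * ‖u₀‖ ^ 2 := by ring
      _ ≤ ⟪A u₀, u₀⟫ := hA u₀ hu₀
      _ = ⟪A (u₀ + u₁) + S p, u₀⟫ - ⟪A u₁, u₀⟫ := by
        rw [map_add, inner_add_left, inner_add_left, hSp]; ring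
      _ ≤ ‖A (u₀ + u₁) + S p‖ * ‖u₀‖ + ‖A‖ * ‖u₁‖ * ‖u₀‖ := by
        have hAu₁ : |⟪A u₁, u₀⟫| ≤ ‖A‖ * ‖u₁‖ * ‖u₀‖ := (abs_real_inner_le_norm _ _).trans
          (mul_le_mul_of_nonneg_right (A.le_opNorm u₁) (norm_nonneg _))
        linarith [real_inner_le_norm (A (u₀ + u₁) + S p) u₀, neg_abs_le ⟪A u₁, u₀⟫]
      _ = _ := by ring
  rcases (norm_nonneg u₀).eq_or_lt with h0 | h0
  · rw [← h0, mul_zero]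
    positivity
  · exact le_of_mul_le_mul_right key h0

theorem mul_mul_norm_le (hK : 0 < K) (hS : ∀ q, K * ‖q‖ ≤ ‖S q‖) (hα : 0 ≤ α)
    (hA : ∀ v ∈ (S†).ker, α * ‖v‖ ^ 2 ≤ ⟪A v, v⟫) (u : E) (p : F) :
    α * K * ‖u‖ ≤ K * ‖A u + S p‖ + (‖A‖ + α) * ‖(S†) u‖ := by
  obtain ⟨u₀, hu₀, u₁, hu₁, rfl⟩ := (S†).ker.exists_add_mem_mem_orthogonal u
  have hS₁ : K * ‖u₁‖ ≤ ‖(S†) (u₀ + u₁)‖ := by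
    rw [map_add, show (S†) u₀ = 0 from hu₀, zero_add]
    exact S.mul_norm_le_norm_adjoint_apply hK hS hu₁
  have hA₀ := mul_norm_le_of_mem_ker_adjoint hA hu₀ u₁ p
  linarith [mul_le_mul_of_nonneg_left hA₀ hK.le,
    mul_le_mul_of_nonneg_left (norm_add_le u₀ u₁) (mul_nonneg hα hK.le),
    mul_le_mul_of_nonneg_left hS₁ (add_nonneg (norm_nonneg A) hα)]

theorem exists_norm_add_norm_le (hK : 0 < K) (hS : ∀ q, K * ‖q‖ ≤ ‖S q‖) (hα : 0 < α)
    (hA : ∀ v ∈ (S†).ker, α * ‖v‖ ^ 2 ≤ ⟪A v, v⟫) :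
    ∃ M > 0, ∀ u p, ‖u‖ + ‖p‖ ≤ M * (‖A u + S p‖ + ‖(S†) u‖) := by
  set M₁ := (K + ‖A‖ + α) / (α * K)
  have hM₁ : 0 < M₁ := by positivity
  refine ⟨M₁ + (1 + ‖A‖ * M₁) / K, by positivity, fun u p => ?_⟩
  set m := ‖A u + S p‖ + ‖(S†) u‖
  have hm₁ : ‖A u + S p‖ ≤ m := le_add_of_nonneg_right (norm_nonneg _)
  have hm₂ : ‖(S†) u‖ ≤ m := le_add_of_nonneg_left (norm_nonneg _)
  have hu : ‖u‖ ≤ M₁ * m := by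
    rw [div_mul_eq_mul_div, le_div_iff₀ (by positivity)]
    nlinarith [mul_mul_norm_le hK hS hα.le hA u p, norm_nonneg A]
  have hp : ‖p‖ ≤ (1 + ‖A‖ * M₁) / K * m := by
    rw [div_mul_eq_mul_div, le_div_iff₀ hK]
    have hSp : ‖S p‖ ≤ ‖A u + S p‖ + ‖A‖ * ‖u‖ := by
      calc ‖S p‖ = ‖(A u + S p) - A u‖ := by rw [add_sub_cancel_left]
        _ ≤ ‖A u + S p‖ + ‖A u‖ := norm_sub_le _ _
        _ ≤ _ := by gcongr; exact A.le_opNorm u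
    nlinarith [hS p, mul_le_mul_of_nonneg_left hu (norm_nonneg A)]
  linarith

theorem exists_mul_sqrt_mul_sqrt_le (hK : 0 < K) (hS : ∀ q, K * ‖q‖ ≤ ‖S q‖) (hα : 0 < α)
    (hA : ∀ v ∈ (S†).ker, α * ‖v‖ ^ 2 ≤ ⟪A v, v⟫) :
    ∃ κ > 0, ∀ u p, κ * √(‖u‖ ^ 2 + ‖p‖ ^ 2) * √(‖A u + S p‖ ^ 2 + ‖(S†) u‖ ^ 2) ≤
      ‖A u + S p‖ ^ 2 + ‖(S†) u‖ ^ 2 := by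
  obtain ⟨M, hM, h⟩ := exists_norm_add_norm_le hK hS hα hA
  exact ⟨(2 * M)⁻¹, by positivity, fun u p =>
    inv_mul_sqrt_mul_sqrt_le (norm_nonneg u) (norm_nonneg p) hM (h u p)⟩

theorem eq_zero_of_apply_eq_zero (hK : 0 < K) (hS : ∀ q, K * ‖q‖ ≤ ‖S q‖) (hα : 0 < α)
    (hA : ∀ v ∈ (S†).ker, α * ‖v‖ ^ 2 ≤ ⟪A v, v⟫) {u : E} {p : F} (h₁ : A u + S p = 0)
    (h₂ : (S†) u = 0) : u = 0 ∧ p = 0 := by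
  obtain ⟨M, -, h⟩ := exists_norm_add_norm_le hK hS hα hA
  have hup := h u p
  simp only [h₁, h₂, norm_zero, add_zero, mul_zero] at hup
  exact ⟨norm_le_zero_iff.mp (by linarith [norm_nonneg p]),
    norm_le_zero_iff.mp (by linarith [norm_nonneg u])⟩

theorem norm_sq_add_norm_sq (A : E →L[ℝ] E) (S : F →L[ℝ] E) (u : E) (p : F) :
    ‖A u + S p‖ ^ 2 + ‖(S†) u‖ ^ 2 = ⟪A u, A u + S p⟫ + ⟪S p, A u + S p⟫ + ⟪S ((S†) u), u⟫ := by
  rw [← real_inner_self_eq_norm_sq, ← real_inner_self_eq_norm_sq, inner_add_left,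
    ContinuousLinearMap.adjoint_inner_left, real_inner_comm (S ((S†) u))]

end Brezzi

theorem stmt_8_general {V Q : Type*}
    [NormedAddCommGroup V] [InnerProductSpace ℝ V] [CompleteSpace V]
    [NormedAddCommGroup Q] [InnerProductSpace ℝ Q] [CompleteSpace Q]
    (V₀ : Submodule ℝ V) (Q₀ : Submodule ℝ Q)
    (hV₀ : IsClosed (V₀ : Set V)) (hQ₀ : IsClosed (Q₀ : Set Q))
    (a : V →ₗ[ℝ] V →ₗ[ℝ] ℝ) (b : Q →ₗ[ℝ] V →ₗ[ℝ] ℝ)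
    (Ca Cb : ℝ) (hCa : ∀ u v, |a u v| ≤ Ca * ‖u‖ * ‖v‖)
    (hCb : ∀ p v, |b p v| ≤ Cb * ‖p‖ * ‖v‖)
    (α : ℝ) (hα : 0 < α)
    (hcoer : ∀ v ∈ V₀, (∀ q ∈ Q₀, b q v = 0) → a v v ≥ α * ‖v‖ ^ 2)
    (Kb : ℝ) (hKb : 0 < Kb)
    (hinfsup : ∀ p ∈ Q₀, ∃ v ∈ V₀, v ≠ 0 ∧ b p v ≥ Kb * ‖p‖ * ‖v‖) :
    ∃ KB > 0, ∀ u ∈ V₀, ∀ p ∈ Q₀, ∃ v ∈ V₀, ∃ q ∈ Q₀, ¬(v = 0 ∧ q = 0) ∧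
      a u v + b p v + b q u ≥
        KB * Real.sqrt (‖u‖ ^ 2 + ‖p‖ ^ 2) * Real.sqrt (‖v‖ ^ 2 + ‖q‖ ^ 2) := by
  have := hV₀.completeSpace_coe
  have := hQ₀.completeSpace_coe
  obtain ⟨A, hA⟩ := exists_inner_eq_of_abs_le (a.compl₁₂ V₀.subtype V₀.subtype) fun u v => hCa u v
  obtain ⟨S, hS⟩ := exists_inner_eq_of_abs_le (b.compl₁₂ Q₀.subtype V₀.subtype) fun q v => hCb q v
  have hS_below : ∀ q, Kb * ‖q‖ ≤ ‖S q‖ := fun q => by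
    obtain ⟨v, hv, hv0, hbv⟩ := hinfsup q q.2
    refine le_norm_of_mul_norm_le_inner (v := ⟨v, hv⟩) (by simpa using hv0) ?_
    simpa [hS] using hbv
  have hA_coer : ∀ v ∈ (S†).ker, α * ‖v‖ ^ 2 ≤ ⟪A v, v⟫ := fun v hv => by
    refine (hA v v).symm ▸ hcoer v v.2 fun q hq => ?_
    have h := hS ⟨q, hq⟩ v
    rw [← ContinuousLinearMap.adjoint_inner_right, show (S†) v = 0 from hv, inner_zero_right] at h
    simpa using h.symm
  obtain ⟨κ, hκ, hinf⟩ := Brezzi.exists_mul_sqrt_mul_sqrt_le hKb hS_below hα hA_coer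
  refine ⟨κ, hκ, fun u hu p hp => ?_⟩
  let u' : V₀ := ⟨u, hu⟩
  let p' : Q₀ := ⟨p, hp⟩
  by_cases hvq : A u' + S p' = 0 ∧ (S†) u' = 0
  · obtain ⟨hu0, hp0⟩ := Brezzi.eq_zero_of_apply_eq_zero hKb hS_below hα hA_coer hvq.1 hvq.2
    simp only [u', p', Submodule.mk_eq_zero] at hu0 hp0
    obtain ⟨w, hw, hw0, -⟩ := hinfsup 0 Q₀.zero_mem
    exact ⟨w, hw, 0, Q₀.zero_mem, fun h => hw0 h.1, by simp [hu0, hp0]⟩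
  · refine ⟨_, (A u' + S p').2, _, ((S†) u').2, by simpa only [Submodule.coe_eq_zero] using hvq, ?_⟩
    have hB := Brezzi.norm_sq_add_norm_sq A S u' p'
    rw [hA, hS, hS] at hB
    exact hB ▸ hinf u' p'

theorem stmt_8 {V Q : Type*}
    [NormedAddCommGroup V] [InnerProductSpace ℝ V] [CompleteSpace V]
    [NormedAddCommGroup Q] [InnerProductSpace ℝ Q] [CompleteSpace Q]
    (V₀ : Submodule ℝ V) (Q₀ : Submodule ℝ Q)
    (hV₀ : IsClosed (V₀ : Set V)) (hQ₀ : IsClosed (Q₀ : Set Q))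
    (a : V →ₗ[ℝ] V →ₗ[ℝ] ℝ) (b : Q →ₗ[ℝ] V →ₗ[ℝ] ℝ)
    (Ca Cb : ℝ) (hCa : ∀ u v, |a u v| ≤ Ca * ‖u‖ * ‖v‖)
    (hCb : ∀ p v, |b p v| ≤ Cb * ‖p‖ * ‖v‖)
    (hsym : ∀ u v, a u v = a v u)
    (α : ℝ) (hα : 0 < α)
    (hcoer : ∀ v ∈ V₀, (∀ q ∈ Q₀, b q v = 0) → a v v ≥ α * ‖v‖ ^ 2)
    (Kb : ℝ) (hKb : 0 < Kb)
    (hinfsup : ∀ p ∈ Q₀, ∃ v ∈ V₀, v ≠ 0 ∧ b p v ≥ Kb * ‖p‖ * ‖v‖) :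
    ∃ KB > 0, ∀ u ∈ V₀, ∀ p ∈ Q₀, ∃ v ∈ V₀, ∃ q ∈ Q₀, ¬(v = 0 ∧ q = 0) ∧
      a u v + b p v + b q u ≥
        KB * Real.sqrt (‖u‖ ^ 2 + ‖p‖ ^ 2) * Real.sqrt (‖v‖ ^ 2 + ‖q‖ ^ 2) :=
  stmt_8_general V₀ Q₀ hV₀ hQ₀ a b Ca Cb hCa hCb α hα hcoer Kb hKb hinfsup
end

section
/- Suppose a bilinear form B on a finite-dimensional normed space X satisfies: for every u ∈ X, there exists v ∈ X with ‖v‖ ≤ M‖u‖, M > 0, and B u v ≥ K‖u‖² with K > 0. Then for every bounded linear functional L on X, the problem B u v = L v for all v ∈ X has a unique solution u, and ‖u‖ ≤ (M/K)·‖L‖. -/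
theorem stmt_11 {X : Type*} [NormedAddCommGroup X] [NormedSpace ℝ X]
    [FiniteDimensional ℝ X]
    (B : X →ₗ[ℝ] X →ₗ[ℝ] ℝ) (K M : ℝ) (hK : 0 < K) (hM : 0 < M)
    (hinfsup : ∀ u : X, ∃ v : X, ‖v‖ ≤ M * ‖u‖ ∧ B u v ≥ K * ‖u‖ ^ 2)
    (L : X →L[ℝ] ℝ) :
    (∃! u : X, ∀ v : X, B u v = L v) ∧
      ∀ u : X, (∀ v : X, B u v = L v) → ‖u‖ ≤ (M / K) * ‖L‖ := by
  -- injectivity of B as a map X → Dual X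
  have hinj : Function.Injective (B : X →ₗ[ℝ] Module.Dual ℝ X) := by
    rw [← LinearMap.ker_eq_bot]
    rw [Submodule.eq_bot_iff]
    intro u hu
    obtain ⟨v, hv1, hv2⟩ := hinfsup u
    have : B u = 0 := hu
    have h0 : B u v = 0 := by rw [this]; rfl
    have : K * ‖u‖ ^ 2 ≤ 0 := by linarith [hv2]
    have : ‖u‖ = 0 := by
      by_contra h
      have hp : 0 < ‖u‖ := (norm_nonneg u).lt_of_ne (Ne.symm h)
      nlinarith [mul_pos hK (pow_pos hp 2)]
    exact norm_eq_zero.mp this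
  have hsurj : Function.Surjective (B : X →ₗ[ℝ] Module.Dual ℝ X) :=
    (LinearMap.injective_iff_surjective_of_finrank_eq_finrank
      Subspace.dual_finrank_eq.symm).mp hinj
  obtain ⟨u, hu⟩ := hsurj (L : X →ₗ[ℝ] ℝ)
  have hstab : ∀ u : X, (∀ v : X, B u v = L v) → ‖u‖ ≤ (M / K) * ‖L‖ := by
    intro u hu
    obtain ⟨v, hv1, hv2⟩ := hinfsup u
    have h1 : K * ‖u‖ ^ 2 ≤ L v := by rw [← hu v]; exact hv2
    have h2 : L v ≤ ‖L‖ * (M * ‖u‖) :=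
      le_trans (le_abs_self _) (le_trans (L.le_opNorm v)
        (mul_le_mul_of_nonneg_left hv1 (norm_nonneg L)))
    rcases eq_or_lt_of_le (norm_nonneg u) with h | h
    · rw [← h]
      positivity
    · have : K * ‖u‖ ≤ M * ‖L‖ := by nlinarith
      rw [div_mul_eq_mul_div, le_div_iff₀ hK]
      nlinarith
  refine ⟨⟨u, fun v => by rw [hu]; rfl, ?_⟩, hstab⟩
  intro y hy
  apply hinj
  ext v
  rw [hy v, hu]; rfl
end
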